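/- Let α ∈ (0, 2π) and k ∈ ℝ. If for both choices of sign ± the inequality ((1/2 − α/(2π) − (k ± 1/4))²)/(α/(2π)) + (1/4)² ≥ ((1/2 − α/(2π) − k)²)/(α/(2π)) holds, then (1 − 1/4)/2 − (1 + 1/8)·α/(2π) ≤ k ≤ (1 + 1/4)/2 − (1 − 1/8)·α/(2π). -/

import Mathlib

open Real

/-! Writing `a = α/(2π)` and `b = 1/2 - a - k`, moving the index by `t` changes the energy
`b²/a` by `((b - t)² - b²)/a = (t² - 2tb)/a`, so the condition for `t = ±1/4` says exactly
`|b| ≤ (1 + a)/8`, which is the claimed two-sided bound on `k`. -/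

theorem sq_div_le_sq_sub_div_add_sq_iff {a : ℝ} (ha : 0 < a) (b t : ℝ) :
    b ^ 2 / a ≤ (b - t) ^ 2 / a + t ^ 2 ↔ 2 * t * b ≤ t ^ 2 * (1 + a) := by
  rw [div_add' _ _ _ ha.ne', div_le_div_iff_of_pos_right ha]
  constructor <;> intro h <;> linarith

theorem balanced_boundary_singularities_general (α k : ℝ)
    (hα0 : 0 < α)
    (h : ∀ s : ℝ, s = 1 ∨ s = -1 →
      ((1/2 - α/(2*π) - (k + s * (1/4)))^2) / (α/(2*π)) + (1/4)^2 ≥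
        ((1/2 - α/(2*π) - k)^2) / (α/(2*π))) :
    (1 - 1/4)/2 - (1 + 1/8) * (α/(2*π)) ≤ k ∧
      k ≤ (1 + 1/4)/2 - (1 - 1/8) * (α/(2*π)) := by
  set a := α/(2*π)
  have ha : 0 < a := by positivity
  have shift : ∀ s : ℝ, s = 1 ∨ s = -1 →
      2 * (s * (1/4)) * (1/2 - a - k) ≤ (s * (1/4)) ^ 2 * (1 + a) := by
    intro s hs
    have hs_sq : s ^ 2 = 1 := by rcases hs with rfl | rfl <;> norm_num
    rw [← sq_div_le_sq_sub_div_add_sq_iff ha, mul_pow, hs_sq, one_mul, sub_sub _ k]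
    exact h s hs
  have h_up := shift 1 (Or.inl rfl)
  have h_down := shift (-1) (Or.inr rfl)
  constructor <;> linarith

/-- Balanced boundary singularities optimality condition. -/
theorem balanced_boundary_singularities (α k : ℝ)
    (hα0 : 0 < α) (hα2 : α < 2 * π)
    (h : ∀ s : ℝ, s = 1 ∨ s = -1 →
      ((1/2 - α/(2*π) - (k + s * (1/4)))^2) / (α/(2*π)) + (1/4)^2 ≥
        ((1/2 - α/(2*π) - k)^2) / (α/(2*π))) :
    (1 - 1/4)/2 - (1 + 1/8) * (α/(2*π)) ≤ k ∧
      k ≤ (1 + 1/4)/2 - (1 - 1/8) * (α/(2*π)) :=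
  balanced_boundary_singularities_general α k hα0 h
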